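/- Let F : M → N be a functor between homotopical categories, (Q, q : Q ⟶ 𝟭_M) a left deformation into a full subcategory M_Q on which F preserves weak equivalences, and (R, r : 𝟭_M ⟶ R) a right deformation into a full subcategory M_R on which F preserves weak equivalences. If Q maps M_R into itself, then the two induced functors Ho(M) → Ho(N) determined by δ∘F∘Q and δ∘F∘R are naturally isomorphic (i.e. the left and right derived functors of F agree). -/

import Mathlib

/-!
By naturality of `q`, each component of the natural weak equivalence `q ≫ r : Q ⟶ R` factors as
`Q.map (r.app X) ≫ q.app (R.obj X)` through `Q (R X)`, which lies in both `M_Q` and `M_R`.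
The first factor is a weak equivalence (2-out-of-3 against `q`) between objects of `M_Q`, the
second one a weak equivalence between objects of `M_R`, so `F` sends both to weak equivalences.
Hence `δ ∘ F ∘ Q ≅ δ ∘ F ∘ R`, and this isomorphism descends to the localization.
-/

open CategoryTheory

namespace CategoryTheory.MorphismProperty

variable {C : Type*} [Category* C]

lemma hasTwoOutOfThreeProperty_of_twoOutOfSix (W : MorphismProperty C)
    (h : ∀ {X Y Z T : C} (f : X ⟶ Y) (g : Y ⟶ Z) (h : Z ⟶ T),
      W (f ≫ g) → W (g ≫ h) → W f ∧ W g ∧ W h ∧ W (f ≫ g ≫ h)) :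
    W.HasTwoOutOfThreeProperty where
  comp_mem f g hf hg := by
    simpa using (h f (𝟙 _) g (by simpa using hf) (by simpa using hg)).2.2.2
  of_postcomp f g hg hfg := (h f g (𝟙 _) hfg (by simpa using hg)).1
  of_precomp f g hf hfg := (h (𝟙 _) f g (by simpa using hf) hfg).2.2.1

lemma map_app_mem_of_deformations (W : MorphismProperty C) [W.HasTwoOutOfThreeProperty]
    {Q R : C ⥤ C} {q : Q ⟶ 𝟭 C} (hq : ∀ X, W (q.app X))
    {r : 𝟭 C ⟶ R} (hr : ∀ X, W (r.app X)) (X : C) : W (Q.map (r.app X)) :=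
  W.of_postcomp _ (q.app (R.obj X)) (hq _) (by
    rw [q.naturality (r.app X)]
    exact W.comp_mem _ _ (hq X) (hr X))

end CategoryTheory.MorphismProperty

theorem statement5_general {M : Type u₁} [Category.{v₁} M] {N : Type u₂} [Category.{v₂} N]
    (WM : MorphismProperty M) (WN : MorphismProperty N)
    (h26M : ∀ {X Y Z T : M} (f : X ⟶ Y) (g : Y ⟶ Z) (h : Z ⟶ T),
      WM (f ≫ g) → WM (g ≫ h) → WM f ∧ WM g ∧ WM h ∧ WM (f ≫ g ≫ h))
    (F : M ⥤ N)
    (PQ PR : M → Prop)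
    (Q : M ⥤ M) (hQ : ∀ X : M, PQ (Q.obj X))
    (q : Q ⟶ 𝟭 M) (hq : ∀ X : M, WM (q.app X))
    (R : M ⥤ M) (hR : ∀ X : M, PR (R.obj X))
    (r : 𝟭 M ⟶ R) (hr : ∀ X : M, WM (r.app X))
    -- `F` preserves weak equivalences on `M_Q` and on `M_R`:
    (hFQ : ∀ {X Y : M} (f : X ⟶ Y), PQ X → PQ Y → WM f → WN (F.map f))
    (hFR : ∀ {X Y : M} (f : X ⟶ Y), PR X → PR Y → WM f → WN (F.map f))
    -- `Q` maps `M_R` into itself: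
    (hQR : ∀ X : M, PR X → PR (Q.obj X))
    -- `LF` and `RF` are the functors on homotopy categories induced by `δ∘F∘Q`, `δ∘F∘R`:
    (LF RF : WM.Localization ⥤ WN.Localization)
    (eL : WM.Q ⋙ LF ≅ Q ⋙ F ⋙ WN.Q)
    (eR : WM.Q ⋙ RF ≅ R ⋙ F ⋙ WN.Q) :
    Nonempty (LF ≅ RF) := by
  have := WM.hasTwoOutOfThreeProperty_of_twoOutOfSix h26M
  have hτ : IsIso (Functor.whiskerRight (q ≫ r) (F ⋙ WN.Q)) := by
    refine (NatTrans.isIso_iff_isIso_app _).2 fun X => ?_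
    have hfactor : (q ≫ r).app X = Q.map (r.app X) ≫ q.app (R.obj X) :=
      (q.naturality (r.app X)).symm
    have hQr : WN (F.map (Q.map (r.app X))) :=
      hFQ _ (hQ X) (hQ _) (WM.map_app_mem_of_deformations hq hr X)
    have hqR : WN (F.map (q.app (R.obj X))) := hFR _ (hQR _ (hR X)) (hR X) (hq _)
    have := Localization.inverts WN.Q WN _ hQr
    have := Localization.inverts WN.Q WN _ hqR
    simp only [Functor.whiskerRight_app, Functor.comp_map, hfactor, Functor.map_comp]
    infer_instance
  let _ : Localization.Lifting WM.Q WM (Q ⋙ F ⋙ WN.Q) LF := ⟨eL⟩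
  let _ : Localization.Lifting WM.Q WM (R ⋙ F ⋙ WN.Q) RF := ⟨eR⟩
  exact ⟨Localization.liftNatIso WM.Q WM _ _ LF RF
    (asIso (Functor.whiskerRight (q ≫ r) (F ⋙ WN.Q)))⟩

/-- If `(Q, q)` is a left `F`-deformation into `M_Q`, `(R, r)` a right
`F`-deformation into `M_R`, and `Q` maps `M_R` into itself, then the induced functors
`Ho(M) ⥤ Ho(N)` determined by `δ∘F∘Q` and `δ∘F∘R` (the left and right derived functors
of `F`) are naturally isomorphic. -/
theorem statement5 {M : Type u₁} [Category.{v₁} M] {N : Type u₂} [Category.{v₂} N]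
    (WM : MorphismProperty M) (WN : MorphismProperty N)
    (hidM : ∀ X : M, WM (𝟙 X))
    (h26M : ∀ {X Y Z T : M} (f : X ⟶ Y) (g : Y ⟶ Z) (h : Z ⟶ T),
      WM (f ≫ g) → WM (g ≫ h) → WM f ∧ WM g ∧ WM h ∧ WM (f ≫ g ≫ h))
    (hidN : ∀ X : N, WN (𝟙 X))
    (h26N : ∀ {X Y Z T : N} (f : X ⟶ Y) (g : Y ⟶ Z) (h : Z ⟶ T),
      WN (f ≫ g) → WN (g ≫ h) → WN f ∧ WN g ∧ WN h ∧ WN (f ≫ g ≫ h))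
    (F : M ⥤ N)
    (PQ PR : M → Prop)
    (Q : M ⥤ M) (hQ : ∀ X : M, PQ (Q.obj X))
    (q : Q ⟶ 𝟭 M) (hq : ∀ X : M, WM (q.app X))
    (R : M ⥤ M) (hR : ∀ X : M, PR (R.obj X))
    (r : 𝟭 M ⟶ R) (hr : ∀ X : M, WM (r.app X))
    -- `F` preserves weak equivalences on `M_Q` and on `M_R`:
    (hFQ : ∀ {X Y : M} (f : X ⟶ Y), PQ X → PQ Y → WM f → WN (F.map f))
    (hFR : ∀ {X Y : M} (f : X ⟶ Y), PR X → PR Y → WM f → WN (F.map f))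
    -- `Q` maps `M_R` into itself:
    (hQR : ∀ X : M, PR X → PR (Q.obj X))
    -- `LF` and `RF` are the functors on homotopy categories induced by `δ∘F∘Q`, `δ∘F∘R`:
    (LF RF : WM.Localization ⥤ WN.Localization)
    (eL : WM.Q ⋙ LF ≅ Q ⋙ F ⋙ WN.Q)
    (eR : WM.Q ⋙ RF ≅ R ⋙ F ⋙ WN.Q) :
    Nonempty (LF ≅ RF) :=
  statement5_general WM WN h26M F PQ PR Q hQ q hq R hR r hr hFQ hFR hQR LF RF eL eR
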